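/- For the amplitude damping channel, if γ > 1/2 then for every a ∈ (0,1) the coherent information I(a,γ) = h((1−γ)a) − h(γa) is negative, and if γ < 1/2 it is positive, where h is the binary entropy function. -/
import Mathlib

/-- Binary entropy function (base 2). -/
noncomputable def binEnt (x : ℝ) : ℝ :=
  -(x * Real.logb 2 x) - (1 - x) * Real.logb 2 (1 - x)

lemma binEnt_eq (x : ℝ) : binEnt x = Real.binEntropy x / Real.log 2 := by
  simp [binEnt, Real.binEntropy, Real.logb, Real.log_inv]
  ring

lemma binEntropy_lt_of (s t : ℝ) (hs : 0 ≤ s) (hst : s < t) (hst' : s < 1 - t) :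
    Real.binEntropy s < Real.binEntropy t := by
  rcases le_or_gt t 2⁻¹ with h | h
  · exact Real.binEntropy_strictMonoOn ⟨hs, by linarith⟩ ⟨by linarith, h⟩ hst
  · rw [← Real.binEntropy_one_sub t]
    exact Real.binEntropy_strictMonoOn ⟨hs, by linarith⟩ ⟨by linarith, by linarith⟩ hst'

/-- Sign of the coherent information `I(a,γ) = h((1−γ)a) − h(γa)` of the
amplitude damping channel: negative for `γ > 1/2` and positive for `γ < 1/2`,
for every `a ∈ (0,1)`. -/
theorem adChannel_coherent_information_sign (γ a : ℝ)
    (hγ0 : 0 ≤ γ) (hγ1 : γ ≤ 1) (ha0 : 0 < a) (ha1 : a < 1) :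
    (1 / 2 < γ → binEnt ((1 - γ) * a) - binEnt (γ * a) < 0) ∧
      (γ < 1 / 2 → 0 < binEnt ((1 - γ) * a) - binEnt (γ * a)) := by
  have hlog : 0 < Real.log 2 := Real.log_pos (by norm_num)
  constructor
  · intro h
    have : Real.binEntropy ((1 - γ) * a) < Real.binEntropy (γ * a) := by
      apply binEntropy_lt_of <;> nlinarith
    rw [binEnt_eq, binEnt_eq]
    exact sub_neg.2 ((div_lt_div_iff_of_pos_right hlog).2 this)
  · intro h
    have : Real.binEntropy (γ * a) < Real.binEntropy ((1 - γ) * a) := by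
      apply binEntropy_lt_of <;> nlinarith
    rw [binEnt_eq, binEnt_eq]
    exact sub_pos.2 ((div_lt_div_iff_of_pos_right hlog).2 this)
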